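/- arXiv:1509.07058 — 3 statements merged into one kernel-verified Lean document; each statement's English description precedes it below -/
import Mathlib

section
/- Let n, k be positive integers with k < n, let d = gcd(k+1, n), and let p be a positive integer such that the p-th cyclotomic polynomial Φ_p(q) divides the q-integer [d]_q = 1 + q + ⋯ + q^{d-1}. Then Φ_p(q) divides the Gaussian binomial coefficient binom(n, k)_q in ℤ[q]. -/
open Polynomial

/-- The q-integer `[d]_q = 1 + q + ⋯ + q^{d-1}` as a polynomial in `ℤ[q]`. -/
noncomputable def qInt (d : ℕ) : Polynomial ℤ := ∑ i ∈ Finset.range d, X ^ i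

/-- The Gaussian (q-)binomial coefficient `binom(n,k)_q` as a polynomial in `ℤ[q]`,
    defined by the q-Pascal recurrence. -/
noncomputable def qBinom : ℕ → ℕ → Polynomial ℤ
  | _, 0 => 1
  | 0, _ + 1 => 0
  | n + 1, k + 1 => qBinom n k + X ^ (k + 1) * qBinom n (k + 1)

/-- The q-factorial. -/
noncomputable def qFact : ℕ → Polynomial ℤ := fun n => ∏ j ∈ Finset.range n, qInt (j + 1)

lemma qFact_succ (n : ℕ) : qFact (n + 1) = qFact n * qInt (n + 1) := by
  simp [qFact, Finset.prod_range_succ]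

lemma qInt_add (a b : ℕ) : qInt (a + b) = qInt a + X ^ a * qInt b := by
  simp only [qInt, Finset.sum_range_add, Finset.mul_sum, pow_add]

lemma qInt_mul_X_sub_one (j : ℕ) : qInt j * (X - 1) = X ^ j - 1 := geom_sum_mul X j

lemma qInt_dvd (j : ℕ) : qInt j ∣ (X : Polynomial ℤ) ^ j - 1 :=
  ⟨X - 1, (qInt_mul_X_sub_one j).symm⟩

lemma qBinom_zero (n : ℕ) : qBinom n 0 = 1 := by cases n <;> rfl

lemma qBinom_of_lt : ∀ n k : ℕ, n < k → qBinom n k = 0 := by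
  intro n
  induction n with
  | zero => intro k hk; match k, hk with | (k+1), _ => rfl
  | succ n ih =>
    intro k hk
    match k, hk with
    | (k+1), hk =>
      show qBinom n k + X ^ (k + 1) * qBinom n (k + 1) = 0
      rw [ih k (by omega), ih (k+1) (by omega), mul_zero, add_zero]

lemma qBinom_self : ∀ n : ℕ, qBinom n n = 1 := by
  intro n
  induction n with
  | zero => rfl
  | succ n ih =>
    show qBinom n n + X ^ (n + 1) * qBinom n (n + 1) = 1
    rw [ih, qBinom_of_lt n (n+1) (by omega), mul_zero, add_zero]

lemma qBinom_mul_qFact : ∀ n k : ℕ, k ≤ n →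
    qBinom n k * (qFact k * qFact (n - k)) = qFact n := by
  intro n
  induction n with
  | zero => intro k hk; interval_cases k; simp [qBinom_zero, qFact]
  | succ n ih =>
    intro k hk
    match k with
    | 0 => simp [qBinom_zero, qFact]
    | (k+1) =>
      show (qBinom n k + X ^ (k + 1) * qBinom n (k + 1)) * _ = _
      rcases eq_or_lt_of_le hk with h | h
      · have hkn : k = n := by omega
        subst hkn
        rw [qBinom_of_lt k (k+1) (by omega), mul_zero, add_zero, qBinom_self]
        simp [qFact]
      · have hk1n : k + 1 ≤ n := by omega
        have t1 := ih k (by omega)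
        have t2 := ih (k + 1) hk1n
        have f1 : qFact (k + 1) = qFact k * qInt (k + 1) := qFact_succ k
        have f2 : qFact (n - k) = qFact (n - (k + 1)) * qInt (n - k) := by
          rw [show n - k = (n - (k + 1)) + 1 by omega, qFact_succ,
            show n - (k + 1) + 1 = n - k by omega]
        rw [show n + 1 - (k + 1) = n - k from by omega]
        calc (qBinom n k + X ^ (k + 1) * qBinom n (k + 1)) * (qFact (k + 1) * qFact (n - k))
            = qBinom n k * (qFact k * qFact (n - k)) * qInt (k + 1)
              + X ^ (k + 1) * (qBinom n (k + 1) * (qFact (k + 1) * qFact (n - (k + 1))))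
                * qInt (n - k) := by
              rw [f1, f2]; ring
          _ = qFact n * qInt (k + 1) + X ^ (k + 1) * qFact n * qInt (n - k) := by
              rw [t1, t2]
          _ = qFact n * qInt (n + 1) := by
              rw [show n + 1 = (k + 1) + (n - k) from by omega,
                qInt_add (k + 1) (n - k)]; ring
          _ = qFact (n + 1) := (qFact_succ n).symm

lemma cyc_prime {p : ℕ} (hp : 0 < p) : Prime (cyclotomic p ℤ) :=
  (UniqueFactorizationMonoid.irreducible_iff_prime).mp (cyclotomic.irreducible hp)

lemma cyc_dvd_cyc {p e : ℕ} (hp : 0 < p) (he : 0 < e)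
    (h : cyclotomic p ℤ ∣ cyclotomic e ℤ) : p = e :=
  cyclotomic_injective (R := ℤ)
    (eq_of_monic_of_associated (cyclotomic.monic p ℤ) (cyclotomic.monic e ℤ)
      ((cyclotomic.irreducible hp).associated_of_dvd (cyclotomic.irreducible he) h))

lemma cyc_dvd_X_pow_sub_one_imp {p j : ℕ} (hp : 0 < p) (hj : 0 < j)
    (h : cyclotomic p ℤ ∣ X ^ j - 1) : p ∣ j := by
  rw [← prod_cyclotomic_eq_X_pow_sub_one hj ℤ] at h
  obtain ⟨e, he, hd⟩ := ((cyc_prime hp).dvd_finset_prod_iff _).mp h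
  have := cyc_dvd_cyc hp (Nat.pos_of_mem_divisors he) hd
  exact this ▸ Nat.dvd_of_mem_divisors he

lemma cyc_sq_not_dvd {p j : ℕ} (hp : 0 < p) (hj : 0 < j) :
    ¬ (cyclotomic p ℤ * cyclotomic p ℤ ∣ X ^ j - 1) := by
  intro h
  have hpj : p ∣ j :=
    cyc_dvd_X_pow_sub_one_imp hp hj (dvd_trans (dvd_mul_right _ _) h)
  have hmem : p ∈ j.divisors := Nat.mem_divisors.mpr ⟨hpj, hj.ne'⟩
  rw [← prod_cyclotomic_eq_X_pow_sub_one hj ℤ,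
    ← Finset.prod_erase_mul _ _ hmem] at h
  have h2 : cyclotomic p ℤ ∣ ∏ e ∈ j.divisors.erase p, cyclotomic e ℤ :=
    (mul_dvd_mul_iff_right (cyc_prime hp).ne_zero).mp h
  obtain ⟨e, he, hd⟩ := ((cyc_prime hp).dvd_finset_prod_iff _).mp h2
  have hep : e ≠ p := (Finset.mem_erase.mp he).1
  exact hep ((cyc_dvd_cyc hp
    (Nat.pos_of_mem_divisors (Finset.mem_of_mem_erase he)) hd).symm)

lemma cyc_not_dvd_qInt {p j : ℕ} (hp : 0 < p) (hpj : ¬ p ∣ j) :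
    ¬ cyclotomic p ℤ ∣ qInt j := by
  intro h
  rcases Nat.eq_zero_or_pos j with rfl | hj
  · exact hpj (dvd_zero p)
  · exact hpj (cyc_dvd_X_pow_sub_one_imp hp hj (h.trans (qInt_dvd j)))

lemma cyc_dvd_qInt_exact {p j : ℕ} (hp : 2 ≤ p) (hj : 0 < j) (hpj : p ∣ j) :
    ∃ S, qInt j = cyclotomic p ℤ * S ∧ ¬ cyclotomic p ℤ ∣ S := by
  have hp0 : 0 < p := by omega
  obtain ⟨t, rfl⟩ := hpj
  have h1 : cyclotomic p ℤ ∣ X ^ (p * t) - 1 := by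
    refine (cyclotomic.dvd_X_pow_sub_one p ℤ).trans ?_
    have := sub_dvd_pow_sub_pow ((X : Polynomial ℤ) ^ p) 1 t
    rwa [one_pow, ← pow_mul] at this
  have hX1 : ¬ cyclotomic p ℤ ∣ (X - 1 : Polynomial ℤ) := by
    intro h
    rw [← cyclotomic_one ℤ] at h
    have := cyc_dvd_cyc hp0 one_pos h
    omega
  have h2 : cyclotomic p ℤ ∣ qInt (p * t) := by
    rw [← qInt_mul_X_sub_one] at h1
    rcases (cyc_prime hp0).dvd_mul.mp h1 with h | h
    · exact h
    · exact absurd h hX1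
  obtain ⟨S, hS⟩ := h2
  refine ⟨S, hS, fun hdS => ?_⟩
  obtain ⟨T, hT⟩ := hdS
  refine cyc_sq_not_dvd hp0 hj ?_
  rw [← qInt_mul_X_sub_one, hS, hT]
  exact ⟨T * (X - 1), by ring⟩

lemma qFact_factor {p : ℕ} (hp : 2 ≤ p) : ∀ m : ℕ,
    ∃ R, qFact m = cyclotomic p ℤ ^ (m / p) * R ∧ ¬ cyclotomic p ℤ ∣ R := by
  have hp0 : 0 < p := by omega
  intro m
  induction m with
  | zero =>
    exact ⟨1, by simp [qFact], fun h => (cyc_prime hp0).not_unit (isUnit_of_dvd_one h)⟩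
  | succ m ih =>
    obtain ⟨R, hR, hnR⟩ := ih
    by_cases hdc : p ∣ (m + 1)
    · obtain ⟨S, hS, hnS⟩ := cyc_dvd_qInt_exact hp (by omega) hdc
      have hdiv : (m + 1) / p = m / p + 1 := by
        rw [Nat.succ_div, if_pos hdc]
      refine ⟨R * S, ?_, ?_⟩
      · rw [qFact_succ, hR, hS, hdiv]; ring
      · intro h
        rcases (cyc_prime hp0).dvd_mul.mp h with h | h
        · exact hnR h
        · exact hnS h
    · have hdiv : (m + 1) / p = m / p := by
        rw [Nat.succ_div, if_neg hdc, add_zero]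
      refine ⟨R * qInt (m + 1), ?_, ?_⟩
      · rw [qFact_succ, hR, hdiv]; ring
      · intro h
        rcases (cyc_prime hp0).dvd_mul.mp h with h | h
        · exact hnR h
        · exact cyc_not_dvd_qInt hp0 hdc h

/-- If `d = gcd(k+1,n)` with `0 < k < n`, and `Φ_p(q)` divides `[d]_q`, then
    `Φ_p(q)` divides the Gaussian binomial coefficient `binom(n,k)_q`. -/
theorem cyclotomic_dvd_qBinom (n k d p : ℕ) (hk : 0 < k) (hkn : k < n)
    (hd : d = Nat.gcd (k + 1) n) (hp : 0 < p)
    (hdvd : cyclotomic p ℤ ∣ qInt d) :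
    cyclotomic p ℤ ∣ qBinom n k := by
  have hd0 : 0 < d := by
    rw [hd]; exact Nat.gcd_pos_of_pos_left n (by omega)
  -- p ≥ 2
  have hp2 : 2 ≤ p := by
    rcases (by omega : p = 1 ∨ 2 ≤ p) with rfl | h
    · exfalso
      rw [cyclotomic_one ℤ] at hdvd
      obtain ⟨T, hT⟩ := hdvd
      have := congrArg (Polynomial.eval (1 : ℤ)) hT
      simp [qInt, Polynomial.eval_finset_sum] at this
      omega
    · exact h
  -- p ∣ k+1 and p ∣ n
  have hpd : p ∣ d :=
    cyc_dvd_X_pow_sub_one_imp (by omega) hd0 (hdvd.trans (qInt_dvd d))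
  have hpk1 : p ∣ k + 1 := hpd.trans (hd ▸ Nat.gcd_dvd_left _ _)
  have hpn : p ∣ n := hpd.trans (hd ▸ Nat.gcd_dvd_right _ _)
  -- arithmetic on exponents
  obtain ⟨m, hm⟩ := hpk1
  obtain ⟨s, hs⟩ := hpn
  have hm0 : m ≠ 0 := by rintro rfl; simp at hm
  obtain ⟨m', rfl⟩ : ∃ m', m = m' + 1 := ⟨m - 1, by omega⟩
  rw [Nat.mul_succ] at hm
  have hms : m' + 1 ≤ s := by
    have h1 : p * (m' + 1) ≤ p * s := by
      rw [Nat.mul_succ, ← hm, ← hs]; omega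
    exact Nat.le_of_mul_le_mul_left h1 (by omega)
  obtain ⟨t, rfl⟩ : ∃ t, s = m' + 1 + t := ⟨s - (m' + 1), by omega⟩
  have hkp : k / p = m' := by
    rw [show k = p * m' + (p - 1) by omega, Nat.mul_add_div (by omega)]
    simp [Nat.div_eq_of_lt (show p - 1 < p by omega)]
  have hnk : n - k = p * t + 1 := by
    have hn' : n = p * (m' + 1) + p * t := by rw [hs]; ring
    rw [Nat.mul_succ] at hn'
    omega
  have hnkp : (n - k) / p = t := by
    rw [hnk, Nat.mul_add_div (by omega)]
    simp [Nat.div_eq_of_lt (show (1:ℕ) < p by omega)]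
  have hnp : n / p = m' + 1 + t := by
    rw [hs, Nat.mul_div_cancel_left _ (show 0 < p by omega)]
  have habc : n / p = (k / p + (n - k) / p) + 1 := by
    rw [hkp, hnkp, hnp]; omega
  -- factorizations
  obtain ⟨Rn, hRn, hnRn⟩ := qFact_factor hp2 n
  obtain ⟨Rk, hRk, hnRk⟩ := qFact_factor hp2 k
  obtain ⟨Rj, hRj, hnRj⟩ := qFact_factor hp2 (n - k)
  have key := qBinom_mul_qFact n k hkn.le
  rw [hRn, hRk, hRj, habc] at key
  set π := cyclotomic p ℤ with hπ
  have hπ0 : π ≠ 0 := (cyc_prime (by omega)).ne_zero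
  set b := k / p + (n - k) / p with hb
  have key2 : π ^ b * (qBinom n k * (Rk * Rj)) = π ^ b * (π * Rn) := by
    rw [hb]; linear_combination key
  have key3 := mul_left_cancel₀ (pow_ne_zero b hπ0) key2
  have hdd : π ∣ qBinom n k * (Rk * Rj) := ⟨Rn, key3⟩
  rcases (cyc_prime (by omega : 0 < p)).dvd_mul.mp hdd with h | h
  · exact h
  · rcases (cyc_prime (by omega : 0 < p)).dvd_mul.mp h with h | h
    · exact absurd h hnRk
    · exact absurd h hnRj
end

section
/- Let λ be a partition of n with c_i parts equal to i for each i, and let ℓ = ℓ(λ) be its number of parts. Then the number of Dyck paths of order n having exactly c_i maximal vertical runs of length i for each i equals (1/(n+1)) · multinomial(n+1; c₁, c₂, …, c_n, n−ℓ+1). -/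
/-- A Dyck path of order `n`, encoded as a word in `Bool` (with `true` = north
    step, `false` = east step): length `2n`, `n` north steps, and every prefix
    has at least as many north steps as east steps (path stays weakly above `y=x`). -/
def IsDyck (n : ℕ) (D : List Bool) : Prop :=
  D.length = 2 * n ∧ D.count true = n ∧
    ∀ k, (D.take k).count false ≤ (D.take k).count true

/-- Auxiliary: lengths of maximal runs of `true` (north steps); the first
    argument accumulates the length of the current run. -/
def runLensAux : ℕ → List Bool → List ℕ
  | 0, [] => []
  | k + 1, [] => [k + 1]
  | 0, false :: l => runLensAux 0 l
  | k + 1, false :: l => (k + 1) :: runLensAux 0 l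
  | k, true :: l => runLensAux (k + 1) l
  termination_by _ l => l.length

/-- The list of lengths of the maximal vertical runs of a Dyck word. -/
def runLens (D : List Bool) : List ℕ := runLensAux 0 D

/-!
Encode a Dyck word by the list `a` of the numbers of north steps immediately preceding each of
its `n` east steps; the maximal vertical runs are the nonzero entries of `a`, and the Dyck
condition says `j ≤ a₁ + ⋯ + aⱼ` for all `j`. Appending a `0` turns `a` into a word `w` of length
`n + 1` and sum `n` all of whose proper prefixes have sum at least their length, and the letters
of `w` are prescribed by the multiplicities `c i`. By the cycle lemma, exactly one of the `n + 1`
rotations of any word with these letters has this prefix property: it starts right after the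
first position where `(w₁ + ⋯ + wₘ) - m` is minimal. Hence `n + 1` times the number of Dyck paths
is the number of all words with these letters, a multinomial coefficient.
-/

open Nat

namespace Multiset

variable {α : Type*} [DecidableEq α]

instance finite_coe_eq (m : Multiset α) : Finite {l : List α // (l : Multiset α) = m} :=
  Set.Finite.to_subtype <| m.lists.toFinset.finite_toSet.subset fun l hl => by
    simpa [mem_lists_iff] using hl.symm

theorem natCard_coe_eq_sum_erase {m : Multiset α} (hm : m ≠ 0) :
    Nat.card {l : List α // (l : Multiset α) = m} =
      ∑ a ∈ m.toFinset, Nat.card {l : List α // (l : Multiset α) = m.erase a} := by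
  let cons : (Σ a : m.toFinset, {l : List α // (l : Multiset α) = m.erase a}) →
      {l : List α // (l : Multiset α) = m} := fun p =>
    ⟨p.1.1 :: p.2.1, by rw [← cons_coe, p.2.2, cons_erase (mem_toFinset.mp p.1.2)]⟩
  rw [← Finset.sum_coe_sort, ← Nat.card_sigma]
  refine (Nat.card_eq_of_bijective cons ⟨?_, ?_⟩).symm
  · rintro ⟨⟨a, ha⟩, t, ht⟩ ⟨⟨b, hb⟩, u, hu⟩ h
    obtain ⟨rfl, rfl⟩ := List.cons_eq_cons.mp (congrArg Subtype.val h)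
    rfl
  · rintro ⟨_ | ⟨a, t⟩, hl⟩
    · exact absurd hl.symm (by simpa using hm)
    · have ha : a ∈ m := by simp [← hl]
      refine ⟨⟨⟨a, mem_toFinset.mpr ha⟩, t, ?_⟩, rfl⟩
      show (t : Multiset α) = m.erase a
      rw [← hl, ← cons_coe, erase_cons_head]

theorem prod_factorial_count_eq_count_mul {m : Multiset α} {s : Finset α} {a : α} (ha : a ∈ m)
    (hs : m.toFinset ⊆ s) :
    ∏ b ∈ s, (m.count b)! = m.count a * ∏ b ∈ s, ((m.erase a).count b)! := by
  have has : a ∈ s := hs (mem_toFinset.mpr ha)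
  rw [← Finset.mul_prod_erase s _ has, ← Finset.mul_prod_erase s _ has, count_erase_self,
    ← mul_assoc, Nat.mul_factorial_pred (count_ne_zero.mpr ha)]
  congr 1
  exact Finset.prod_congr rfl fun b hb => by rw [count_erase_of_ne (Finset.ne_of_mem_erase hb)]

theorem natCard_coe_eq_mul_prod_factorial (m : Multiset α) {s : Finset α} (hs : m.toFinset ⊆ s) :
    Nat.card {l : List α // (l : Multiset α) = m} * ∏ b ∈ s, (m.count b)! = (card m)! := by
  induction m using Multiset.strongInductionOn with
  | ih m IH =>
  rcases eq_or_ne m 0 with rfl | hm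
  · simp
  · calc _ = ∑ a ∈ m.toFinset,
          Nat.card {l : List α // (l : Multiset α) = m.erase a} * ∏ b ∈ s, (m.count b)! := by
          rw [natCard_coe_eq_sum_erase hm, Finset.sum_mul]
      _ = ∑ a ∈ m.toFinset, m.count a * (card m - 1)! := Finset.sum_congr rfl fun a ha => by
          have ha : a ∈ m := mem_toFinset.mp ha
          have hsa : (m.erase a).toFinset ⊆ s :=
            (toFinset_subset.mpr (subset_of_le (erase_le a m))).trans hs
          rw [prod_factorial_count_eq_count_mul ha hs, mul_left_comm,
            IH _ (erase_lt.mpr ha) hsa, card_erase_of_mem ha, Nat.pred_eq_sub_one]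
      _ = (card m)! := by
          rw [← Finset.sum_mul, toFinset_sum_count_eq, Nat.mul_factorial_pred (card_pos.mpr hm).ne']

theorem count_sum_replicate (s : Finset α) (f : α → ℕ) (a : α) :
    count a (∑ i ∈ s, replicate (f i) i) = if a ∈ s then f a else 0 := by
  simp [count_sum', count_replicate]

theorem natCard_coe_eq_sum_replicate (s : Finset α) (f : α → ℕ) :
    Nat.card {l : List α // (l : Multiset α) = ∑ i ∈ s, replicate (f i) i} =
      Nat.multinomial s f := by
  set m := ∑ i ∈ s, replicate (f i) i
  have hcount : ∀ b ∈ s, m.count b = f b := fun b hb => by simp [m, count_sum_replicate, hb]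
  have hs : m.toFinset ⊆ s := fun b hb => by
    by_contra h
    rw [mem_toFinset, ← count_ne_zero, count_sum_replicate, if_neg h] at hb
    exact hb rfl
  have key := natCard_coe_eq_mul_prod_factorial m hs
  rw [Finset.prod_congr rfl fun b hb => congrArg Nat.factorial (hcount b hb), card_sum] at key
  simp only [card_replicate] at key
  rw [← Nat.multinomial_spec s f, mul_comm] at key
  exact Nat.eq_of_mul_eq_mul_left (Finset.prod_pos fun i _ => Nat.factorial_pos _) key

theorem coe_eq_sum_replicate_iff {l : List α} {s : Finset α} {f : α → ℕ}
    (hf : ∀ i ∉ s, f i = 0) :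
    (l : Multiset α) = ∑ i ∈ s, replicate (f i) i ↔ ∀ i, l.count i = f i := by
  rw [Multiset.ext]
  refine forall_congr' fun i => ?_
  rw [coe_count, count_sum_replicate]
  split_ifs with hi
  · rfl
  · rw [hf i hi]

theorem filter_ne_add_replicate_count (s : Multiset α) (a : α) :
    s.filter (· ≠ a) + replicate (s.count a) a = s := by
  rw [← filter_eq']
  conv_rhs => rw [← filter_add_not (· ≠ a) s]
  simp only [ne_eq, not_not]

theorem add_singleton_zero_eq_add_replicate_iff {A C : Multiset ℕ} {n : ℕ} (hC : 0 ∉ C)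
    (hCn : card C ≤ n) :
    A + {0} = C + replicate (n + 1 - card C) 0 ↔ A.filter (· ≠ 0) = C ∧ card A = n := by
  constructor
  · intro h
    refine ⟨?_, ?_⟩
    · simpa [filter_add, filter_singleton,
        filter_eq_self.mpr fun x hx => ne_of_mem_of_not_mem hx hC,
        filter_eq_nil.mpr fun x hx => not_not.mpr (eq_of_mem_replicate hx)]
        using congrArg (filter (· ≠ 0)) h
    · have := congrArg card h
      simp only [card_add, card_singleton, card_replicate] at this
      omega
  · rintro ⟨hAC, hAn⟩
    have hcard := congrArg card (filter_ne_add_replicate_count A 0)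
    rw [← filter_ne_add_replicate_count A 0, hAC]
    rw [card_add, card_replicate, hAC] at hcard
    rw [show n + 1 - card C = count 0 A + 1 by omega, add_assoc, replicate_succ, ← singleton_add,
      add_comm {0}]

theorem card_le_sum_of_zero_notMem {C : Multiset ℕ} (hC : 0 ∉ C) :
    card C ≤ C.sum := by
  simpa using card_nsmul_le_sum fun x hx =>
    Nat.one_le_iff_ne_zero.mpr (ne_of_mem_of_not_mem hx hC)

end Multiset

theorem Nat.card_subtype_comp_of_injective {α β : Type*} {f : α → β} (hf : Function.Injective f)
    {p : β → Prop} (hp : ∀ b, p b → b ∈ Set.range f) :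
    Nat.card {a // p (f a)} = Nat.card {b // p b} :=
  Nat.card_preimage_of_injective (s := {b | p b}) hf hp

namespace List

-- Together with `w.sum + 1 = w.length` this makes `w` a Łukasiewicz word.
def Dominating (w : List ℕ) : Prop := ∀ j < w.length, j ≤ (w.take j).sum

variable {w : List ℕ} {i j k : ℕ}

theorem sum_take_rotate_add_sum_take (hjk : j + k ≤ w.length) :
    ((w.rotate k).take j).sum + (w.take k).sum = (w.take (k + j)).sum := by
  rw [rotate_eq_drop_append_take (by omega), take_append_of_le_length (by simp; omega), take_add,
    sum_append, add_comm]

theorem sum_take_rotate_length_sub_add (hk : k ≤ w.length) (hi : i ≤ k) :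
    ((w.rotate k).take (w.length - k + i)).sum + (w.take k).sum = w.sum + (w.take i).sum := by
  rw [rotate_eq_drop_append_take hk, take_append, take_of_length_le (by simp), length_drop,
    Nat.add_sub_cancel_left, take_take, min_eq_left hi, sum_append, ← sum_take_add_sum_drop w k]
  omega

theorem dominating_rotate_of_isFirstMin (hw : w.sum + 1 = w.length) (hk : k ≤ w.length)
    (hmin : ∀ m ≤ w.length, (w.take k).sum + m ≤ (w.take m).sum + k)
    (hfirst : ∀ i < k, (w.take k).sum + i < (w.take i).sum + k) :
    Dominating (w.rotate k) := by
  intro j hj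
  rw [length_rotate] at hj
  by_cases hjk : j + k ≤ w.length
  · have := sum_take_rotate_add_sum_take hjk
    have := hmin (k + j) (by omega)
    omega
  · obtain ⟨i, rfl⟩ : ∃ i, j = w.length - k + i := ⟨j - (w.length - k), by omega⟩
    have := sum_take_rotate_length_sub_add hk (i := i) (by omega)
    have := hfirst i (by omega)
    omega

theorem exists_dominating_rotate (hw : w.sum + 1 = w.length) :
    ∃ k, 0 < k ∧ k ≤ w.length ∧ Dominating (w.rotate k) := by
  classical
  -- `(w.take k).sum - k` is minimal at `k`; the first such `k` is the rotation we want
  have hex : ∃ k, k ≤ w.length ∧ ∀ m ≤ w.length, (w.take k).sum + m ≤ (w.take m).sum + k := by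
    obtain ⟨k, hk, hmin⟩ := (Finset.range (w.length + 1)).exists_min_image
      (fun m => (w.take m).sum + (w.length - m)) ⟨0, by simp⟩
    rw [Finset.mem_range] at hk
    refine ⟨k, by omega, fun m hm => ?_⟩
    have := hmin m (Finset.mem_range.mpr (by omega))
    omega
  obtain ⟨hkN, hmin⟩ := Nat.find_spec hex
  have hfirst :
      ∀ i < Nat.find hex, (w.take (Nat.find hex)).sum + i < (w.take i).sum + Nat.find hex :=
    fun i hi => by
      have := Nat.find_min hex hi
      push Not at this
      obtain ⟨m, hm, hlt⟩ := this (by omega)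
      have := hmin m hm
      omega
  refine ⟨Nat.find hex, Nat.pos_of_ne_zero fun h0 => ?_, hkN,
    dominating_rotate_of_isFirstMin hw hkN hmin hfirst⟩
  have := hmin w.length le_rfl
  rw [h0, take_length] at this
  simp at this
  omega

theorem eq_zero_of_dominating_rotate (hw : w.sum + 1 = w.length) (hdom : Dominating w)
    (hk : k < w.length) (hrot : Dominating (w.rotate k)) : k = 0 := by
  -- the proper prefixes `w.take k` and `(w.rotate k).take (w.length - k) = w.drop k` cover `w`,
  -- so their sums would add up to at least `w.length > w.sum`
  by_contra hk0
  have h1 := hdom k hk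
  have h2 := hrot (w.length - k) (by simp; omega)
  have h3 := sum_take_rotate_add_sum_take (w := w) (j := w.length - k) (k := k) (by omega)
  rw [Nat.add_sub_cancel' hk.le, take_length] at h3
  omega

theorem eq_of_rotate_eq_rotate_of_dominating {u v : List ℕ} {k k' : ℕ}
    (hv : v.sum + 1 = v.length) (hu : Dominating u) (hv' : Dominating v) (hk' : k' < v.length)
    (hkk : k ≤ k') (h : u.rotate k = v.rotate k') : k = k' ∧ u = v := by
  rw [← Nat.sub_add_cancel hkk, ← rotate_rotate, rotate_eq_rotate] at h
  subst h
  have := eq_zero_of_dominating_rotate hv hv' (by omega) hu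
  rw [this, rotate_zero]
  exact ⟨by omega, rfl⟩

theorem card_mul_natCard_dominating (M : Multiset ℕ) (hM : M.sum + 1 = Multiset.card M) :
    Multiset.card M * Nat.card {w : List ℕ // (w : Multiset ℕ) = M ∧ Dominating w} =
      Nat.card {w : List ℕ // (w : Multiset ℕ) = M} := by
  have hlen : ∀ w : List ℕ, (w : Multiset ℕ) = M → w.length = Multiset.card M := fun w hw => by
    rw [← Multiset.coe_card, hw]
  have hsum : ∀ w : List ℕ, (w : Multiset ℕ) = M → w.sum + 1 = w.length := fun w hw => by
    rw [hlen w hw, ← Multiset.sum_coe, hw, hM]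
  let rot : Fin (Multiset.card M) × {w : List ℕ // (w : Multiset ℕ) = M ∧ Dominating w} →
      {w : List ℕ // (w : Multiset ℕ) = M} :=
    fun p => ⟨p.2.1.rotate p.1, (Multiset.coe_eq_coe.mpr (rotate_perm _ _)).trans p.2.2.1⟩
  rw [← Nat.card_fin (Multiset.card M), ← Nat.card_prod]
  refine Nat.card_eq_of_bijective rot ⟨?_, ?_⟩
  · rintro ⟨k, u, hu⟩ ⟨k', v, hv⟩ h
    replace h : u.rotate k = v.rotate k' := congrArg Subtype.val h
    obtain ⟨hkk, rfl⟩ : (k : ℕ) = k' ∧ u = v := by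
      rcases le_total (k : ℕ) k' with hkk | hkk
      · exact eq_of_rotate_eq_rotate_of_dominating (hsum v hv.1) hu.2 hv.2
          (by rw [hlen v hv.1]; exact k'.2) hkk h
      · exact (eq_of_rotate_eq_rotate_of_dominating (hsum u hu.1) hv.2 hu.2
          (by rw [hlen u hu.1]; exact k.2) hkk h.symm).imp Eq.symm Eq.symm
    rw [Fin.ext hkk]
  · rintro ⟨w, hw⟩
    obtain ⟨k, hk0, hkw, hdom⟩ := exists_dominating_rotate (hsum w hw)
    refine ⟨(⟨w.length - k, by rw [← hlen w hw]; omega⟩,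
      ⟨w.rotate k, (Multiset.coe_eq_coe.mpr (rotate_perm _ _)).trans hw, hdom⟩), ?_⟩
    refine Subtype.ext ?_
    show (w.rotate k).rotate (w.length - k) = w
    rw [rotate_rotate, Nat.add_sub_cancel' hkw, rotate_length]

theorem dominating_append_zero_iff (a : List ℕ) :
    Dominating (a ++ [0]) ↔ ∀ j ≤ a.length, j ≤ (a.take j).sum := by
  simp only [Dominating, length_append, length_singleton, Nat.lt_succ_iff]
  refine forall₂_congr fun j hj => ?_
  rw [take_append_of_le_length hj]

theorem getLast?_eq_some_zero_of_dominating {w : List ℕ} (hw : w.sum + 1 = w.length)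
    (hdom : Dominating w) : w.getLast? = some 0 := by
  rcases eq_nil_or_concat' w with rfl | ⟨u, x, rfl⟩
  · simp at hw
  · have := hdom u.length (by simp)
    rw [take_left] at this
    simp only [sum_append, sum_singleton, length_append, length_singleton] at hw
    simp
    omega

end List

namespace DyckPath

open List (Dominating)
open Multiset (replicate card)

def toWord : List ℕ → List Bool
  | [] => []
  | x :: a => List.replicate x true ++ false :: toWord a

-- `k` north steps are pending; a final run of north steps is dropped.
def fromWord : ℕ → List Bool → List ℕ
  | _, [] => []
  | k, true :: l => fromWord (k + 1) l
  | k, false :: l => k :: fromWord 0 l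

@[simp] theorem toWord_nil : toWord [] = [] := rfl

@[simp] theorem toWord_cons (x : ℕ) (a : List ℕ) :
    toWord (x :: a) = List.replicate x true ++ false :: toWord a := rfl

theorem toWord_append (a b : List ℕ) : toWord (a ++ b) = toWord a ++ toWord b := by
  induction a with
  | nil => rfl
  | cons x a ih => simp [ih]

@[simp] theorem length_toWord (a : List ℕ) : (toWord a).length = a.sum + a.length := by
  induction a with
  | nil => rfl
  | cons x a ih => simp [ih]; omega

@[simp] theorem count_true_toWord (a : List ℕ) : (toWord a).count true = a.sum := by
  induction a with
  | nil => rfl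
  | cons x a ih => simp [List.count_append, ih]

@[simp] theorem count_false_toWord (a : List ℕ) : (toWord a).count false = a.length := by
  induction a with
  | nil => rfl
  | cons x a ih => simp [List.count_append, List.count_replicate, ih]

theorem fromWord_replicate_append (k m : ℕ) (l : List Bool) :
    fromWord k (List.replicate m true ++ l) = fromWord (k + m) l := by
  induction m generalizing k with
  | zero => rfl
  | succ m ih =>
    rw [List.replicate_succ, List.cons_append, fromWord, ih]
    congr 1
    omega

theorem fromWord_toWord (a : List ℕ) : fromWord 0 (toWord a) = a := by
  induction a with
  | nil => rfl
  | cons x a ih => rw [toWord_cons, fromWord_replicate_append, zero_add, fromWord, ih]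

theorem toWord_fromWord_append_false (k : ℕ) (D : List Bool) :
    toWord (fromWord k (D ++ [false])) = List.replicate k true ++ D ++ [false] := by
  induction D generalizing k with
  | nil => simp [fromWord]
  | cons b D ih =>
    cases b with
    | true => simp [fromWord, ih, List.replicate_succ']
    | false => simp [fromWord, ih]

theorem toWord_injective : Function.Injective toWord :=
  Function.LeftInverse.injective fromWord_toWord

theorem mem_range_toWord {D : List Bool} (hD : D.getLast? ≠ some true) :
    D ∈ Set.range toWord := by
  rcases List.eq_nil_or_concat' D with rfl | ⟨D, b, rfl⟩
  · exact ⟨[], rfl⟩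
  · obtain rfl : b = false := by simpa using hD
    exact ⟨fromWord 0 (D ++ [false]), by simp [toWord_fromWord_append_false]⟩

theorem runLensAux_replicate_append (k m : ℕ) (l : List Bool) :
    runLensAux k (List.replicate m true ++ l) = runLensAux (k + m) l := by
  induction m generalizing k with
  | zero => rfl
  | succ m ih =>
    rw [List.replicate_succ, List.cons_append, runLensAux, ih]
    congr 1
    omega

theorem runLens_toWord (a : List ℕ) : runLens (toWord a) = a.filter (· ≠ 0) := by
  induction a with
  | nil => simp [runLens, runLensAux]
  | cons x a ih =>
    unfold runLens at *
    cases x <;> simpa [runLensAux_replicate_append, runLensAux] using ih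

theorem exists_take_toWord_eq (a : List ℕ) (k : ℕ) :
    ∃ j ≤ a.length, ∃ r, (toWord a).take k = toWord (a.take j) ++ List.replicate r true := by
  induction a generalizing k with
  | nil => exact ⟨0, le_rfl, 0, by simp⟩
  | cons x a ih =>
    rcases le_or_gt k x with hkx | hxk
    · refine ⟨0, by simp, k, ?_⟩
      rw [toWord_cons, List.take_append_of_le_length (by simpa), List.take_replicate,
        min_eq_left hkx]
      rfl
    · obtain ⟨k, rfl⟩ : ∃ k', k = x + (k' + 1) := ⟨k - x - 1, by omega⟩
      obtain ⟨j, hj, r, hr⟩ := ih k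
      refine ⟨j + 1, by simpa, r, ?_⟩
      rw [toWord_cons, List.take_append, List.take_of_length_le (by simp), List.length_replicate,
        Nat.add_sub_cancel_left, List.take_succ_cons, hr, List.take_succ_cons, toWord_cons]
      simp

theorem take_toWord_sum_take_add {a : List ℕ} {j : ℕ} (hj : j ≤ a.length) :
    (toWord a).take ((a.take j).sum + j) = toWord (a.take j) := by
  conv_lhs => rw [← List.take_append_drop j a, toWord_append]
  exact List.take_left' (by simp [hj])

theorem ballot_toWord_iff (a : List ℕ) :
    (∀ k, ((toWord a).take k).count false ≤ ((toWord a).take k).count true) ↔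
      ∀ j ≤ a.length, j ≤ (a.take j).sum := by
  constructor
  · intro h j hj
    simpa [take_toWord_sum_take_add hj, hj] using h ((a.take j).sum + j)
  · intro h k
    obtain ⟨j, hj, r, hr⟩ := exists_take_toWord_eq a k
    have := h j hj
    simp [hr, List.count_append, List.count_replicate, hj]
    omega

theorem isDyck_toWord_iff (n : ℕ) (a : List ℕ) :
    IsDyck n (toWord a) ↔ a.length = n ∧ a.sum = n ∧ ∀ j ≤ a.length, j ≤ (a.take j).sum := by
  rw [IsDyck, ballot_toWord_iff, length_toWord, count_true_toWord]
  constructor <;> rintro ⟨hlen, hsum, hballot⟩ <;> exact ⟨by omega, hsum, hballot⟩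

theorem getLast?_ne_some_true_of_isDyck {n : ℕ} {D : List Bool} (h : IsDyck n D) :
    D.getLast? ≠ some true := by
  obtain ⟨hlen, hct, hballot⟩ := h
  intro hlast
  obtain ⟨D, rfl⟩ := List.getLast?_eq_some_iff.mp hlast
  have hcount := List.count_not_add_count (D ++ [true]) true
  have hprefix := hballot D.length
  rw [List.take_left] at hprefix
  simp [List.count_append] at hct hcount hlen
  omega

theorem isDyck_toWord_and_runLens_iff {n : ℕ} {C : Multiset ℕ} (hC : 0 ∉ C) (hCsum : C.sum = n)
    (a : List ℕ) :
    IsDyck n (toWord a) ∧ (runLens (toWord a) : Multiset ℕ) = C ↔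
      ((a ++ [0] : List ℕ) : Multiset ℕ) = C + replicate (n + 1 - card C) 0 ∧
        Dominating (a ++ [0]) := by
  have hsum : (a.filter (· ≠ 0) : Multiset ℕ) = C → a.sum = n := fun h => by
    rw [← hCsum, ← h, ← Multiset.sum_coe, ← Multiset.filter_coe]
    conv_lhs => rw [← Multiset.filter_ne_add_replicate_count (a : Multiset ℕ) 0]
    simp
  have hCn : card C ≤ n := hCsum ▸ Multiset.card_le_sum_of_zero_notMem hC
  rw [isDyck_toWord_iff, runLens_toWord, List.dominating_append_zero_iff, ← Multiset.coe_add,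
    Multiset.coe_singleton, Multiset.add_singleton_zero_eq_add_replicate_iff hC hCn,
    Multiset.filter_coe, Multiset.coe_card]
  constructor
  · rintro ⟨⟨hlen, -, hballot⟩, hruns⟩
    exact ⟨⟨hruns, hlen⟩, hballot⟩
  · rintro ⟨⟨hruns, hlen⟩, hballot⟩
    exact ⟨⟨hlen, hsum hruns, hballot⟩, hruns⟩

theorem natCard_isDyck_runLens_eq {n : ℕ} {C : Multiset ℕ} (hC : 0 ∉ C) (hCsum : C.sum = n) :
    Nat.card {D : List Bool // IsDyck n D ∧ (runLens D : Multiset ℕ) = C} =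
      Nat.card {w : List ℕ //
        (w : Multiset ℕ) = C + replicate (n + 1 - card C) 0 ∧ Dominating w} := by
  have hMsum : ∀ w : List ℕ, (w : Multiset ℕ) = C + replicate (n + 1 - card C) 0 →
      w.sum + 1 = w.length := by
    intro w hw
    have hCn := hCsum ▸ Multiset.card_le_sum_of_zero_notMem hC
    have hlen := congrArg card hw
    have hsum := congrArg Multiset.sum hw
    simp only [Multiset.coe_card, Multiset.card_add, Multiset.card_replicate] at hlen
    simp only [Multiset.sum_coe, Multiset.sum_add, Multiset.sum_replicate, smul_zero,
      add_zero] at hsum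
    omega
  calc _ = Nat.card
        {a : List ℕ // IsDyck n (toWord a) ∧ (runLens (toWord a) : Multiset ℕ) = C} :=
        (Nat.card_subtype_comp_of_injective toWord_injective fun D hD =>
          mem_range_toWord (getLast?_ne_some_true_of_isDyck hD.1)).symm
    _ = Nat.card {a : List ℕ // ((a ++ [0] : List ℕ) : Multiset ℕ) =
          C + replicate (n + 1 - card C) 0 ∧ Dominating (a ++ [0])} :=
        Nat.card_congr (Equiv.subtypeEquivRight (isDyck_toWord_and_runLens_iff hC hCsum))
    _ = _ := Nat.card_subtype_comp_of_injective (List.append_left_injective [0])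
        fun w (hw : _ ∧ Dominating w) =>
        ⟨w.dropLast, List.dropLast_append_getLast? 0
          (List.getLast?_eq_some_zero_of_dominating (hMsum w hw.1) hw.2)⟩

end DyckPath

/-- The number of Dyck paths of order `n` whose maximal vertical run lengths have
    multiplicities `c i` (so `∑ i·c i = n`, with `ℓ = ∑ c i` runs) is
    `(1/(n+1))·multinomial(n+1; c₁,…,c_n, n−ℓ+1)`. -/
theorem card_dyck_fixed_run_multiplicities (n : ℕ) (c : ℕ → ℕ) (hc0 : c 0 = 0)
    (hsupp : ∀ i, n < i → c i = 0)
    (hsum : ∑ i ∈ Finset.range (n + 1), i * c i = n) :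
    (n + 1) * Nat.card {D : List Bool // IsDyck n D ∧ ∀ i, (runLens D).count i = c i}
      = Nat.multinomial (Finset.range (n + 1))
          (fun i => if i = 0 then n - (∑ j ∈ Finset.range (n + 1), c j) + 1 else c i) := by
  set C := ∑ i ∈ Finset.range (n + 1), Multiset.replicate (c i) i
  have hC : 0 ∉ C := by
    rw [← Multiset.count_eq_zero, Multiset.count_sum_replicate]
    simp [hc0]
  have hCsum : C.sum = n := by simp [C, Multiset.sum_sum, Multiset.sum_replicate, mul_comm, hsum]
  have hCcard : Multiset.card C = ∑ j ∈ Finset.range (n + 1), c j := by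
    simp [C, Multiset.card_sum]
  have hCn := hCsum ▸ Multiset.card_le_sum_of_zero_notMem hC
  set M := C + Multiset.replicate (n + 1 - Multiset.card C) 0
  have hM : M = ∑ i ∈ Finset.range (n + 1),
      Multiset.replicate (if i = 0 then n - (∑ j ∈ Finset.range (n + 1), c j) + 1 else c i) i := by
    ext i
    rw [Multiset.count_add, Multiset.count_sum_replicate, Multiset.count_sum_replicate,
      Multiset.count_replicate]
    rcases eq_or_ne i 0 with rfl | hi
    · simp [hc0]
      omega
    · simp [hi, Ne.symm hi]
  have hMcard : Multiset.card M = n + 1 := by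
    simp only [M, Multiset.card_add, Multiset.card_replicate]
    omega
  have hcycle := List.card_mul_natCard_dominating M (by rw [hMcard]; simp [M, hCsum])
  rw [hMcard] at hcycle
  have hcsupp : ∀ i ∉ Finset.range (n + 1), c i = 0 := fun i hi => hsupp i (by simpa using hi)
  simp_rw [← Multiset.coe_eq_sum_replicate_iff hcsupp]
  rw [DyckPath.natCard_isDyck_runLens_eq hC hCsum, hcycle, hM,
    Multiset.natCard_coe_eq_sum_replicate]
end

section
/- For every labeled Dyck path P of order n and every contractible valley v of P, there exists an index i < v with i not a contractible valley such that the pair (i, v) is a diagonal inversion of P. Consequently, for any subset V of the contractible valleys of P, the statistic dinv(P) − |V| − ∑_{i ∈ V} d_i(P) ≥ 0, i.e., dinv⁻((P,V)) := ∑_{i ∉ V} d_i(P) − |V| is nonnegative. -/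
/-- A labeled Dyck path of order `n`, encoded by its area vector `a` (with
    `a 0 = 0` and `a (i+1) ≤ a i + 1`) and its positive labels `lab`, which must
    strictly increase up columns (i.e. when `a (i+1) = a i + 1`). -/
structure LabeledDyck (n : ℕ) where
  a : Fin n → ℕ
  lab : Fin n → ℕ
  labPos : ∀ i, 0 < lab i
  aFirst : ∀ h : 0 < n, a ⟨0, h⟩ = 0
  aStep : ∀ (i : ℕ) (h : i + 1 < n),
    a ⟨i + 1, h⟩ ≤ a ⟨i, Nat.lt_of_succ_lt h⟩ + 1
  colInc : ∀ (i : ℕ) (h : i + 1 < n),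
    a ⟨i + 1, h⟩ = a ⟨i, Nat.lt_of_succ_lt h⟩ + 1 →
    lab ⟨i, Nat.lt_of_succ_lt h⟩ < lab ⟨i + 1, h⟩

/-- `(i,j)` with `i < j` is a diagonal inversion: either `a i = a j` and
    `ℓ i < ℓ j` (primary), or `a i = a j + 1` and `ℓ i > ℓ j` (secondary). -/
def DinvPair {n : ℕ} (P : LabeledDyck n) (i j : Fin n) : Prop :=
  i < j ∧ ((P.a i = P.a j ∧ P.lab i < P.lab j) ∨
    (P.a i = P.a j + 1 ∧ P.lab j < P.lab i))

/-- `d_i(P)`: the number of diagonal inversions beginning in row `i`. -/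
noncomputable def dStat {n : ℕ} (P : LabeledDyck n) (i : Fin n) : ℕ :=
  Nat.card {j : Fin n // DinvPair P i j}

/-- Row `i` is a contractible valley: `i ≥ 1` and either `a i < a (i−1)`, or
    `a i = a (i−1)` and `ℓ i > ℓ (i−1)`. -/
def IsVal {n : ℕ} (P : LabeledDyck n) (i : Fin n) : Prop :=
  0 < (i : ℕ) ∧
    (P.a i < P.a ⟨(i : ℕ) - 1, lt_of_le_of_lt (Nat.sub_le _ _) i.2⟩ ∨
      (P.a i = P.a ⟨(i : ℕ) - 1, lt_of_le_of_lt (Nat.sub_le _ _) i.2⟩ ∧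
        P.lab ⟨(i : ℕ) - 1, lt_of_le_of_lt (Nat.sub_le _ _) i.2⟩ < P.lab i))

open scoped Classical

/-- If some row `m < v` has area at least `a v + 1`, then there is a row
    `i ≤ m` forming a dinv pair "body" with `v`. -/
lemma climb_witness {n : ℕ} (P : LabeledDyck n) (v m : Fin n) (hmv : m < v)
    (hm : P.a v + 1 ≤ P.a m) :
    ∃ i : Fin n, i ≤ m ∧
      ((P.a i = P.a v ∧ P.lab i < P.lab v) ∨
        (P.a i = P.a v + 1 ∧ P.lab v < P.lab i)) := by
  classical
  have hn : 0 < n := m.pos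
  set c := P.a v with hc
  let S : Finset (Fin n) := Finset.univ.filter (fun k => k ≤ m ∧ P.a k ≤ c)
  have h0 : (⟨0, hn⟩ : Fin n) ∈ S := by
    simp only [S, Finset.mem_filter, Finset.mem_univ, true_and]
    exact ⟨by simp [Fin.le_def], by simp [P.aFirst hn]⟩
  have hS : S.Nonempty := ⟨_, h0⟩
  set j := S.max' hS with hj
  have hjS : j ∈ S := S.max'_mem hS
  have hjm : j ≤ m ∧ P.a j ≤ c := by simpa [S] using hjS
  have hjne : j ≠ m := by intro h; rw [h] at hjm; omega
  have hjm' : j < m := lt_of_le_of_ne hjm.1 hjne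
  have hj1 : (j : ℕ) + 1 < n := lt_of_le_of_lt hjm' m.2
  set j' : Fin n := ⟨(j : ℕ) + 1, hj1⟩ with hj'
  have hj'm : j' ≤ m := by
    have := hjm'
    simp only [Fin.lt_def] at this
    simp [Fin.le_def, hj']; omega
  have hj'S : j' ∉ S := by
    intro h
    have := S.le_max' _ h
    rw [← hj] at this
    simp only [Fin.le_def, hj'] at this
    omega
  have hj'a : c < P.a j' := by
    by_contra h
    push_neg at h
    exact hj'S (by simp only [S, Finset.mem_filter, Finset.mem_univ, true_and]; exact ⟨hj'm, h⟩)
  have hstep : P.a j' ≤ P.a j + 1 := by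
    have := P.aStep (j : ℕ) hj1
    rwa [Fin.eta, ← hj'] at this
  have haj' : P.a j' = c + 1 := by omega
  have haj : P.a j = c := by omega
  have hlab : P.lab j < P.lab j' := by
    have := P.colInc (j : ℕ) hj1
    rw [Fin.eta, ← hj'] at this
    exact this (by omega)
  by_cases hcmp : P.lab v < P.lab j'
  · exact ⟨j', hj'm, Or.inr ⟨haj', hcmp⟩⟩
  · exact ⟨j, hjm.1, Or.inl ⟨haj, by omega⟩⟩

lemma valley_witness {n : ℕ} (P : LabeledDyck n) (v : Fin n) (hv : IsVal P v) :
    ∃ i : Fin n, i < v ∧ ¬ IsVal P i ∧ DinvPair P i v := by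
  classical
  set c := P.a v with hc
  obtain ⟨hv0, hvcase⟩ := hv
  set vp : Fin n := ⟨(v : ℕ) - 1, lt_of_le_of_lt (Nat.sub_le _ _) v.2⟩ with hvp
  have hvpv : vp < v := by simp only [Fin.lt_def, hvp]; omega
  -- the set of witnesses
  let T : Finset (Fin n) := Finset.univ.filter (fun i => i < v ∧
    ((P.a i = c ∧ P.lab i < P.lab v) ∨ (P.a i = c + 1 ∧ P.lab v < P.lab i)))
  have hT : T.Nonempty := by
    rcases hvcase with h | ⟨h1, h2⟩
    · obtain ⟨i, him, hiw⟩ := climb_witness P v vp hvpv (by omega)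
      refine ⟨i, ?_⟩
      simp only [T, Finset.mem_filter, Finset.mem_univ, true_and]
      exact ⟨lt_of_le_of_lt him hvpv, hiw⟩
    · refine ⟨vp, ?_⟩
      simp only [T, Finset.mem_filter, Finset.mem_univ, true_and]
      exact ⟨hvpv, Or.inl ⟨h1.symm, h2⟩⟩
  set i := T.min' hT with hi
  have hiT : i ∈ T := T.min'_mem hT
  have hiw : i < v ∧ ((P.a i = c ∧ P.lab i < P.lab v) ∨
      (P.a i = c + 1 ∧ P.lab v < P.lab i)) := by simpa [T] using hiT
  have hnotval : ¬ IsVal P i := by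
    intro hvi
    obtain ⟨hi0, hicase⟩ := hvi
    set ip : Fin n := ⟨(i : ℕ) - 1, lt_of_le_of_lt (Nat.sub_le _ _) i.2⟩ with hip
    have hipi : ip < i := by simp only [Fin.lt_def, hip]; omega
    have hipv : ip < v := lt_trans hipi hiw.1
    -- produce a smaller witness
    have hsmall : ∃ k : Fin n, k < i ∧ k < v ∧
        ((P.a k = c ∧ P.lab k < P.lab v) ∨ (P.a k = c + 1 ∧ P.lab v < P.lab k)) := by
      rcases hiw.2 with ⟨hP1, hP2⟩ | ⟨hS1, hS2⟩
      · rcases hicase with h | ⟨h1, h2⟩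
        · -- a ip > a i = c : climb
          obtain ⟨k, hk, hkw⟩ := climb_witness P v ip hipv (by omega)
          exact ⟨k, lt_of_le_of_lt hk hipi, lt_of_le_of_lt hk hipv, hkw⟩
        · -- a ip = c, lab ip < lab i < lab v
          exact ⟨ip, hipi, hipv, Or.inl ⟨by omega, by omega⟩⟩
      · rcases hicase with h | ⟨h1, h2⟩
        · obtain ⟨k, hk, hkw⟩ := climb_witness P v ip hipv (by omega)
          exact ⟨k, lt_of_le_of_lt hk hipi, lt_of_le_of_lt hk hipv, hkw⟩
        · obtain ⟨k, hk, hkw⟩ := climb_witness P v ip hipv (by omega)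
          exact ⟨k, lt_of_le_of_lt hk hipi, lt_of_le_of_lt hk hipv, hkw⟩
    obtain ⟨k, hki, hkv, hkw⟩ := hsmall
    have hkT : k ∈ T := by
      simp only [T, Finset.mem_filter, Finset.mem_univ, true_and]; exact ⟨hkv, hkw⟩
    have := T.min'_le _ hkT
    rw [← hi] at this
    exact absurd (lt_of_lt_of_le hki this) (lt_irrefl _)
  exact ⟨i, hiw.1, hnotval, ⟨hiw.1, hiw.2⟩⟩

open scoped Classical in
/-- Every contractible valley `v` admits a non-valley row `i < v` forming a
    diagonal inversion `(i,v)`; consequently, for any subset `V` of the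
    contractible valleys, `dinv⁻((P,V)) = ∑_{i ∉ V} d_i(P) − |V| ≥ 0`. -/
theorem valley_dinv_nonneg {n : ℕ} (P : LabeledDyck n) :
    (∀ v : Fin n, IsVal P v →
      ∃ i : Fin n, i < v ∧ ¬ IsVal P i ∧ DinvPair P i v)
    ∧ ∀ V : Finset (Fin n), (∀ i ∈ V, IsVal P i) →
        V.card ≤ ∑ i ∈ Vᶜ, dStat P i := by
  classical
  have H1 : ∀ v : Fin n, IsVal P v →
      ∃ i : Fin n, i < v ∧ ¬ IsVal P i ∧ DinvPair P i v := fun v hv => valley_witness P v hv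
  refine ⟨H1, fun V hV => ?_⟩
  have hex : ∀ v : Fin n, ∃ i : Fin n,
      IsVal P v → (i < v ∧ ¬ IsVal P i ∧ DinvPair P i v) := by
    intro v
    by_cases h : IsVal P v
    · obtain ⟨i, hi⟩ := H1 v h
      exact ⟨i, fun _ => hi⟩
    · exact ⟨v, fun h' => absurd h' h⟩
  choose g hg using hex
  have hmap : ∀ v ∈ V, g v ∈ Vᶜ := by
    intro v hv
    rw [Finset.mem_compl]
    intro hgv
    exact (hg v (hV v hv)).2.1 (hV _ hgv)
  have hcard : V.card = ∑ i ∈ Vᶜ, (V.filter (fun v => g v = i)).card :=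
    Finset.card_eq_sum_card_fiberwise hmap
  rw [hcard]
  refine Finset.sum_le_sum fun i _ => ?_
  -- fiber over i injects into dinv pairs starting at i
  have hdin : ∀ v ∈ V.filter (fun v => g v = i), DinvPair P i v := by
    intro v hv
    rw [Finset.mem_filter] at hv
    have := (hg v (hV v hv.1)).2.2
    rwa [hv.2] at this
  rw [dStat, Nat.card_eq_fintype_card, ← Fintype.card_coe (V.filter (fun v => g v = i))]
  exact Fintype.card_le_of_injective
    (fun x => ⟨x.1, hdin x.1 x.2⟩)
    (fun x y h => by
      apply Subtype.ext
      have := congrArg Subtype.val h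
      simpa using this)
end
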